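/- Let r ≥ 2 be an integer and let s, m1, ..., ms be positive integers with s ≤ r, m1 ≥ m2 ≥ ... ≥ ms, m1 ≥ 2, and either s ≥ 3, or (s = 2 and (m1, m2) ≠ (2,2)), or s = 1. Suppose L2 > 0 and LC > 0 are reals with (LC)^2 ≥ L2·(m1^2 + ... + ms^2 − ms). If additionally s·(s+3)/(s+2)·(m1^2 + ... + ms^2 − ms) ≥ (m1 + ... + ms)^2 holds, then LC/(m1 + ... + ms) ≥ sqrt((s+2)/(s(s+3)))·sqrt(L2) ≥ sqrt((r+2)/(r+3))·sqrt(L2/r). -/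

import Mathlib

open Real

theorem antitoneOn_add_two_div_mul_add_three :
    AntitoneOn (fun x : ℝ => (x + 2) / (x * (x + 3))) (Set.Ioi 0) := by
  intro s (hs : 0 < s) r (hr : 0 < r) hsr
  dsimp only
  rw [div_le_div_iff₀ (by positivity) (by positivity)]
  -- (s+2) r (r+3) - (r+2) s (s+3) = (r-s)(rs + 2(r+s) + 6)
  nlinarith [mul_nonneg (sub_nonneg.mpr hsr) (by positivity : 0 ≤ r * s + 2 * (r + s) + 6)]

theorem sqrt_mul_sqrt_div (a L : ℝ) {c : ℝ} (hc : 0 ≤ c) :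
    √a * √(L / c) = √(a / c) * √L := by
  rw [Real.sqrt_div' L hc, Real.sqrt_div' a hc]
  ring

theorem sqrt_div_mul_sqrt_le_div {a b A Q L2 LC : ℝ} (ha : 0 < a) (hb : 0 < b) (hA : 0 < A)
    (hL2 : 0 ≤ L2) (hLC : 0 ≤ LC) (hodge : L2 * Q ≤ LC ^ 2) (hcomb : A ^ 2 ≤ a / b * Q) :
    √(b / a) * √L2 ≤ LC / A := by
  rw [← Real.sqrt_mul (by positivity), Real.sqrt_le_iff]
  refine ⟨by positivity, ?_⟩
  rw [div_pow, le_div_iff₀ (by positivity)]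
  calc b / a * L2 * A ^ 2 ≤ b / a * L2 * (a / b * Q) := by gcongr
    _ = L2 * Q := by field_simp
    _ ≤ LC ^ 2 := hodge

theorem stmt_19_general (r s : ℕ) (hs : 1 ≤ s) (hsr : s ≤ r)
    (m : ℕ → ℕ) (hmpos : ∀ i, i < s → 0 < m i)
    (L2 LC : ℝ) (hL2 : 0 < L2) (hLC : 0 < LC)
    (hodge : LC ^ 2 ≥ L2 * ((∑ i ∈ Finset.range s, (m i : ℝ) ^ 2) - m (s - 1)))
    (hcomb : (s : ℝ) * (s + 3) / (s + 2) *
        ((∑ i ∈ Finset.range s, (m i : ℝ) ^ 2) - m (s - 1)) ≥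
        (∑ i ∈ Finset.range s, (m i : ℝ)) ^ 2) :
    LC / (∑ i ∈ Finset.range s, (m i : ℝ)) ≥
        Real.sqrt ((s + 2) / (s * (s + 3))) * Real.sqrt L2 ∧
      Real.sqrt ((s + 2) / (s * (s + 3))) * Real.sqrt L2 ≥
        Real.sqrt ((r + 2) / (r + 3)) * Real.sqrt (L2 / r) := by
  have hs_pos : (0 : ℝ) < s := by exact_mod_cast hs
  have hsr' : (s : ℝ) ≤ r := by exact_mod_cast hsr
  have hsum_pos : 0 < ∑ i ∈ Finset.range s, (m i : ℝ) :=
    Finset.sum_pos (fun i hi => by exact_mod_cast hmpos i (Finset.mem_range.mp hi))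
      (Finset.nonempty_range_iff.mpr (by omega))
  refine ⟨sqrt_div_mul_sqrt_le_div (by positivity) (by positivity) hsum_pos hL2.le hLC.le
    hodge hcomb, ?_⟩
  rw [ge_iff_le, sqrt_mul_sqrt_div _ _ (Nat.cast_nonneg r), div_div, mul_comm _ (r : ℝ)]
  gcongr √?_ * _
  exact antitoneOn_add_two_div_mul_add_three hs_pos (hs_pos.trans_le hsr') hsr'

theorem stmt_19 (r s : ℕ) (hr : 2 ≤ r) (hs : 1 ≤ s) (hsr : s ≤ r)
    (m : ℕ → ℕ) (hmpos : ∀ i, i < s → 0 < m i)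
    (hmono : ∀ i j, i ≤ j → j < s → m j ≤ m i)
    (hm1 : 2 ≤ m 0)
    (hcase : 3 ≤ s ∨ (s = 2 ∧ ¬(m 0 = 2 ∧ m 1 = 2)) ∨ s = 1)
    (L2 LC : ℝ) (hL2 : 0 < L2) (hLC : 0 < LC)
    (hodge : LC ^ 2 ≥ L2 * ((∑ i ∈ Finset.range s, (m i : ℝ) ^ 2) - m (s - 1)))
    (hcomb : (s : ℝ) * (s + 3) / (s + 2) *
        ((∑ i ∈ Finset.range s, (m i : ℝ) ^ 2) - m (s - 1)) ≥
        (∑ i ∈ Finset.range s, (m i : ℝ)) ^ 2) :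
    LC / (∑ i ∈ Finset.range s, (m i : ℝ)) ≥
        Real.sqrt ((s + 2) / (s * (s + 3))) * Real.sqrt L2 ∧
      Real.sqrt ((s + 2) / (s * (s + 3))) * Real.sqrt L2 ≥
        Real.sqrt ((r + 2) / (r + 3)) * Real.sqrt (L2 / r) :=
  stmt_19_general r s hs hsr m hmpos L2 LC hL2 hLC hodge hcomb
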